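/- arXiv:1401.1113 — 3 statements merged into one kernel-verified Lean document; each statement's English description precedes it below -/
import Mathlib

section
/- The double integral over the unit disc C = {x ∈ ℝ² : |x| < 1} given by (1/(4π)) ∫_C ∫_C 1/|x − y| dx dy equals 4/3. -/
/-!
Substituting `y = x - z`, the double integral becomes `∫ ‖z‖⁻¹ A(‖z‖) dz`, where `A(r)` is the
area of the lens cut out by two unit discs whose centres are `r` apart (by rotation invariance it
depends only on `r`). In polar coordinates the Jacobian `r` cancels `‖z‖⁻¹`, leaving
`2π ∫₀^∞ A(r) dr`. Slicing the lens by lines parallel to the line of centres gives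
`A(r) = ∫ (2√(1 - a²) - r)⁺ da`; integrating in `r` first yields `∫ 2(1 - a²)⁺ da = 8/3`, so the
double integral is `16π/3`.
-/

open MeasureTheory Measure Metric Set Real
open scoped ENNReal Pointwise

section Radial

variable {E : Type*} [NormedAddCommGroup E] [NormedSpace ℝ E] [FiniteDimensional ℝ E]
  [MeasurableSpace E] [BorelSpace E] [Nontrivial E] (μ : Measure E) [μ.IsAddHaarMeasure]

theorem lintegral_fun_norm_addHaar {f : ℝ → ℝ≥0∞} (hf : Measurable f) :
    ∫⁻ x, f ‖x‖ ∂μ = Module.finrank ℝ E * μ (ball 0 1) *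
      ∫⁻ r in Ioi 0, ENNReal.ofReal (r ^ (Module.finrank ℝ E - 1)) * f r := by
  have hg : Measurable fun p : sphere (0 : E) 1 × Ioi (0 : ℝ) ↦ f p.2 := by fun_prop
  calc ∫⁻ x, f ‖x‖ ∂μ = ∫⁻ x : ({(0 : E)}ᶜ : Set E), f ‖(x : E)‖ ∂(μ.comap (↑)) := by
        rw [lintegral_subtype_comap (measurableSet_singleton _).compl (fun x ↦ f ‖x‖),
          restrict_compl_singleton]
    _ = ∫⁻ p, f p.2 ∂(μ.toSphere.prod (volumeIoiPow (Module.finrank ℝ E - 1))) := by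
        simpa using μ.measurePreserving_homeomorphUnitSphereProd.lintegral_comp_emb
          (Homeomorph.measurableEmbedding _) (fun p ↦ f p.2)
    _ = μ.toSphere univ * ∫⁻ r, f r ∂(volumeIoiPow (Module.finrank ℝ E - 1)) := by
        rw [lintegral_prod _ hg.aemeasurable]
        simp [lintegral_const, mul_comm]
    _ = _ := by
        rw [toSphere_apply_univ, volumeIoiPow,
          lintegral_withDensity_eq_lintegral_mul _ (by fun_prop) (by fun_prop),
          ← lintegral_subtype_comap measurableSet_Ioi]
        rfl

end Radial

section SelfConvolution

variable {G : Type*} [MeasurableSpace G] [AddCommGroup G] [MeasurableAdd₂ G] [MeasurableNeg G]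
  (μ : Measure G) [SFinite μ] [μ.IsAddLeftInvariant] [μ.IsNegInvariant]

theorem setLIntegral_setLIntegral_sub_eq_lintegral_measure_inter_vadd {s : Set G}
    (hs : MeasurableSet s) {k : G → ℝ≥0∞} (hk : Measurable k) :
    ∫⁻ x in s, ∫⁻ y in s, k (x - y) ∂μ ∂μ = ∫⁻ z, k z * μ (s ∩ (z +ᵥ s)) ∂μ := by
  have translate (x : G) : ∫⁻ y in s, k (x - y) ∂μ = ∫⁻ z, s.indicator 1 (x - z) * k z ∂μ := by
    rw [← lintegral_indicator hs, ← (measurePreserving_sub_left μ x).lintegral_comp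
      (f := s.indicator fun y ↦ k (x - y)) ((hk.comp (measurable_const_sub x)).indicator hs)]
    congr 1 with z
    by_cases h : x - z ∈ s <;> simp [h]
  have hvadd (z : G) : z +ᵥ s = (· - z) ⁻¹' s := by
    ext x; simp [mem_vadd_set_iff_neg_vadd_mem, sub_eq_neg_add]
  calc ∫⁻ x in s, ∫⁻ y in s, k (x - y) ∂μ ∂μ
      = ∫⁻ x in s, ∫⁻ z, s.indicator 1 (x - z) * k z ∂μ ∂μ := lintegral_congr translate
    _ = ∫⁻ z, ∫⁻ x in s, s.indicator 1 (x - z) * k z ∂μ ∂μ :=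
        lintegral_lintegral_swap ((((measurable_one.indicator hs).comp measurable_sub).mul
          (hk.comp measurable_snd)).aemeasurable)
    _ = ∫⁻ z, k z * μ (s ∩ (z +ᵥ s)) ∂μ := by
        congr 1 with z
        have hpre : MeasurableSet ((· - z) ⁻¹' s) := measurable_sub_const z hs
        rw [lintegral_mul_const (f := fun x ↦ s.indicator 1 (x - z)) _
            ((measurable_one.indicator hs).comp (measurable_sub_const z)),
          mul_comm, hvadd, inter_comm, ← restrict_apply hpre, ← lintegral_indicator_one hpre]
        rfl

end SelfConvolution

section Lens

variable {E : Type*} [NormedAddCommGroup E] [InnerProductSpace ℝ E] [FiniteDimensional ℝ E]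
  [MeasurableSpace E] [BorelSpace E]

theorem volume_ball_inter_ball_eq_of_norm_eq {z w : E} (h : ‖z‖ = ‖w‖) (r s : ℝ) :
    volume (ball 0 r ∩ ball z s) = volume (ball 0 r ∩ ball w s) := by
  set T := (ℝ ∙ (z - w))ᗮ.reflection
  have hT : T.symm w = z := T.symm_apply_eq.mpr (Submodule.reflection_sub h).symm
  have hpre : T ⁻¹' (ball 0 r ∩ ball w s) = ball 0 r ∩ ball z s := by
    rw [preimage_inter, T.preimage_ball, T.preimage_ball, hT, map_zero]
  rw [← hpre, T.measurePreserving.measure_preimage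
    (measurableSet_ball.inter measurableSet_ball).nullMeasurableSet]

end Lens

theorem sq_add_sq_lt_one_iff (a b : ℝ) : a ^ 2 + b ^ 2 < 1 ↔ |b| < √(1 - a ^ 2) := by
  rw [Real.lt_sqrt (abs_nonneg b), sq_abs]
  constructor <;> intro <;> linarith

theorem sq_add_sq_lt_one_and_sq_add_sub_sq_lt_one_iff {r : ℝ} (hr : 0 ≤ r) (a b : ℝ) :
    a ^ 2 + b ^ 2 < 1 ∧ a ^ 2 + (b - r) ^ 2 < 1 ↔ b ∈ Ioo (r - √(1 - a ^ 2)) √(1 - a ^ 2) := by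
  rw [sq_add_sq_lt_one_iff, sq_add_sq_lt_one_iff, abs_lt, abs_lt, mem_Ioo]
  constructor
  · rintro ⟨⟨-, hb⟩, hbr, -⟩
    exact ⟨by linarith, hb⟩
  · rintro ⟨hrb, hb⟩
    exact ⟨⟨by linarith, hb⟩, by linarith, by linarith⟩

theorem EuclideanSpace.mem_ball_one_fin_two_iff (x y : EuclideanSpace ℝ (Fin 2)) :
    x ∈ ball y 1 ↔ (x 0 - y 0) ^ 2 + (x 1 - y 1) ^ 2 < 1 := by
  rw [mem_ball, EuclideanSpace.dist_eq, Real.sqrt_lt' one_pos, Fin.sum_univ_two, Real.dist_eq,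
    Real.dist_eq, sq_abs, sq_abs, one_pow]

theorem volume_ball_inter_ball_single {r : ℝ} (hr : 0 ≤ r) :
    volume (ball (0 : EuclideanSpace ℝ (Fin 2)) 1 ∩ ball (EuclideanSpace.single 1 r) 1) =
      ∫⁻ a, ENNReal.ofReal (2 * √(1 - a ^ 2) - r) := by
  set lower : ℝ → ℝ := fun a ↦ r - √(1 - a ^ 2)
  set upper : ℝ → ℝ := fun a ↦ √(1 - a ^ 2)
  have coords : MeasurePreserving (fun x : EuclideanSpace ℝ (Fin 2) ↦ (x 0, x 1)) :=
    (volume_preserving_finTwoArrow ℝ).comp (PiLp.volume_preserving_ofLp (Fin 2))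
  have hlens : ball (0 : EuclideanSpace ℝ (Fin 2)) 1 ∩ ball (EuclideanSpace.single 1 r) 1 =
      (fun x ↦ (x 0, x 1)) ⁻¹' regionBetween lower upper univ := by
    ext x
    simp only [mem_inter_iff, EuclideanSpace.mem_ball_one_fin_two_iff, regionBetween, mem_preimage]
    simp [sq_add_sq_lt_one_and_sq_add_sub_sq_lt_one_iff hr, lower, upper]
  have hmeas : Measurable upper := by fun_prop
  rw [hlens, coords.measure_preimage
      (measurableSet_regionBetween (by fun_prop) hmeas .univ).nullMeasurableSet, volume_eq_prod,
    volume_regionBetween_eq_lintegral' (by fun_prop) hmeas .univ, restrict_univ]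
  congr 1 with a
  simp only [Pi.sub_apply, lower, upper]
  ring_nf

theorem setLIntegral_ofReal_eq_intervalIntegral {f : ℝ → ℝ} {s : Set ℝ} {a b : ℝ}
    (hs : MeasurableSet s) (hab : a ≤ b) (hsub : Ioc a b ⊆ s) (hf : IntegrableOn f (Ioc a b))
    (hpos : ∀ x ∈ Ioc a b, 0 ≤ f x) (hneg : ∀ x ∈ s \ Ioc a b, f x ≤ 0) :
    ∫⁻ x in s, ENNReal.ofReal (f x) = ENNReal.ofReal (∫ x in a..b, f x) := by
  have hout : ∫⁻ x in s \ Ioc a b, ENNReal.ofReal (f x) = 0 := by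
    rw [setLIntegral_congr_fun (hs.diff measurableSet_Ioc)
      (fun x hx ↦ ENNReal.ofReal_eq_zero.mpr (hneg x hx)), lintegral_zero]
  rw [← lintegral_inter_add_sdiff _ s measurableSet_Ioc, inter_eq_right.mpr hsub, hout, add_zero,
    intervalIntegral.integral_of_le hab,
    ofReal_integral_eq_lintegral_ofReal hf (ae_restrict_of_forall_mem measurableSet_Ioc hpos)]

theorem lintegral_Ioi_ofReal_sub {c : ℝ} (hc : 0 ≤ c) :
    ∫⁻ r in Ioi 0, ENNReal.ofReal (c - r) = ENNReal.ofReal (c ^ 2 / 2) := by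
  rw [setLIntegral_ofReal_eq_intervalIntegral measurableSet_Ioi hc Ioc_subset_Ioi_self
    (by fun_prop : Continuous fun r ↦ c - r).integrableOn_Ioc (fun r hr ↦ sub_nonneg.mpr hr.2)
    (fun r hr ↦ by linarith [not_le.mp fun h ↦ hr.2 ⟨hr.1, h⟩])]
  simp [intervalIntegral.integral_comp_sub_left (fun x ↦ x)]

theorem lintegral_ofReal_one_sub_sq :
    ∫⁻ a, ENNReal.ofReal (1 - a ^ 2) = ENNReal.ofReal (4 / 3) := by
  rw [← setLIntegral_univ, setLIntegral_ofReal_eq_intervalIntegral (a := -1) (b := 1) .univ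
    (by norm_num) (subset_univ _) (by fun_prop : Continuous fun a : ℝ ↦ 1 - a ^ 2).integrableOn_Ioc
    (fun a ha ↦ by nlinarith [ha.1, ha.2]) (fun a ha ↦ ?_)]
  · simp [intervalIntegral.integral_sub]
    norm_num
  · simp only [mem_sdiff, mem_univ, mem_Ioc, true_and, not_and_or, not_lt, not_le] at ha
    rcases ha with ha | ha <;> nlinarith

theorem lintegral_Ioi_lintegral_ofReal_two_mul_sqrt_sub :
    ∫⁻ r in Ioi 0, ∫⁻ a, ENNReal.ofReal (2 * √(1 - a ^ 2) - r) = ENNReal.ofReal (8 / 3) := by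
  have chord (a : ℝ) : ∫⁻ r in Ioi 0, ENNReal.ofReal (2 * √(1 - a ^ 2) - r) =
      2 * ENNReal.ofReal (1 - a ^ 2) := by
    rw [lintegral_Ioi_ofReal_sub (by positivity), mul_pow, Real.sq_sqrt',
      show (2 : ℝ) ^ 2 * max (1 - a ^ 2) 0 / 2 = 2 * max (1 - a ^ 2) 0 by ring,
      ENNReal.ofReal_mul zero_le_two, ENNReal.ofReal_max, ENNReal.ofReal_zero, max_eq_left zero_le,
      ENNReal.ofReal_ofNat]
  rw [lintegral_lintegral_swap (by fun_prop), lintegral_congr chord,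
    lintegral_const_mul _ (by fun_prop), lintegral_ofReal_one_sub_sq, ← ENNReal.ofReal_ofNat 2,
    ← ENNReal.ofReal_mul zero_le_two]
  norm_num

theorem integral_integral_eq_toReal_lintegral_lintegral {α β : Type*} [MeasurableSpace α]
    [MeasurableSpace β] {μ : Measure α} {ν : Measure β} [SFinite ν] {f : α → β → ℝ}
    (hf : Measurable (Function.uncurry f)) (hf_nonneg : ∀ x y, 0 ≤ f x y)
    (hfin : ∫⁻ x, ∫⁻ y, ENNReal.ofReal (f x y) ∂ν ∂μ ≠ ∞) :
    ∫ x, ∫ y, f x y ∂ν ∂μ = (∫⁻ x, ∫⁻ y, ENNReal.ofReal (f x y) ∂ν ∂μ).toReal := by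
  have hF : Measurable fun x ↦ ∫⁻ y, ENNReal.ofReal (f x y) ∂ν :=
    hf.ennreal_ofReal.lintegral_prod_right'
  have inner (x : α) : ∫ y, f x y ∂ν = (∫⁻ y, ENNReal.ofReal (f x y) ∂ν).toReal :=
    integral_eq_lintegral_of_nonneg_ae (ae_of_all _ (hf_nonneg x))
      (hf.of_uncurry_left.aestronglyMeasurable)
  simp_rw [inner]
  exact integral_toReal hF.aemeasurable (ae_lt_top hF hfin)

theorem lintegral_ball_lintegral_ball_inv_dist :
    ∫⁻ x in ball (0 : EuclideanSpace ℝ (Fin 2)) 1, ∫⁻ y in ball 0 1, ENNReal.ofReal (dist x y)⁻¹ =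
      ENNReal.ofReal (16 * π / 3) := by
  set lens : ℝ → ℝ≥0∞ := fun r ↦ ∫⁻ a, ENNReal.ofReal (2 * √(1 - a ^ 2) - r)
  have hlens_meas : Measurable lens :=
    Measurable.lintegral_prod_right'
      (f := fun p : ℝ × ℝ ↦ ENNReal.ofReal (2 * √(1 - p.2 ^ 2) - p.1)) (by fun_prop)
  have hlens (z : EuclideanSpace ℝ (Fin 2)) :
      volume (ball 0 1 ∩ (z +ᵥ ball (0 : EuclideanSpace ℝ (Fin 2)) 1)) = lens ‖z‖ := by
    rw [vadd_ball, vadd_eq_add, add_zero, volume_ball_inter_ball_eq_of_norm_eq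
      (w := EuclideanSpace.single 1 ‖z‖) (by simp),
      volume_ball_inter_ball_single (norm_nonneg z)]
  have hjacobian (r : ℝ) (hr : 0 < r) :
      ENNReal.ofReal (r ^ (2 - 1)) * (ENNReal.ofReal r⁻¹ * lens r) = lens r := by
    rw [pow_one, ← mul_assoc, ← ENNReal.ofReal_mul hr.le, mul_inv_cancel₀ hr.ne',
      ENNReal.ofReal_one, one_mul]
  simp_rw [dist_eq_norm]
  rw [setLIntegral_setLIntegral_sub_eq_lintegral_measure_inter_vadd volume measurableSet_ball
      (k := fun z ↦ ENNReal.ofReal ‖z‖⁻¹) (by fun_prop)]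
  simp_rw [hlens]
  rw [lintegral_fun_norm_addHaar volume (f := fun r ↦ ENNReal.ofReal r⁻¹ * lens r) (by fun_prop),
    finrank_euclideanSpace_fin, EuclideanSpace.volume_ball_fin_two,
    setLIntegral_congr_fun measurableSet_Ioi hjacobian,
    lintegral_Ioi_lintegral_ofReal_two_mul_sqrt_sub, ENNReal.ofReal_one, one_pow, one_mul,
    Nat.cast_ofNat, ← ENNReal.ofReal_ofNat 2, ← ENNReal.ofReal_mul zero_le_two,
    ← ENNReal.ofReal_mul (by positivity)]
  ring_nf

theorem disc_energy_const :
    (1 / (4 * π)) *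
      ∫ x in {x : EuclideanSpace ℝ (Fin 2) | ‖x‖ < 1},
        ∫ y in {y : EuclideanSpace ℝ (Fin 2) | ‖y‖ < 1}, 1 / dist x y = 4 / 3 := by
  have hdisc : {x : EuclideanSpace ℝ (Fin 2) | ‖x‖ < 1} = ball 0 1 := by
    ext x; simp
  simp_rw [hdisc, one_div]
  rw [integral_integral_eq_toReal_lintegral_lintegral (by fun_prop)
      (fun _ _ ↦ inv_nonneg.mpr dist_nonneg) (by simp [lintegral_ball_lintegral_ball_inv_dist]),
    lintegral_ball_lintegral_ball_inv_dist, ENNReal.toReal_ofReal (by positivity)]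
  field_simp
  ring
end

section
/- For all ρ, r > 0 with ρ ≠ r and φ' ∈ ℝ: ∫₀^{2π} cos φ / √(ρ² + r² − 2rρ cos(φ − φ')) dφ = (4 cos φ' / (ρ r)) ∫₀^{min(ρ,r)} t² / (√(ρ² − t²) √(r² − t²)) dt. -/
open MeasureTheory Real Set intervalIntegral

noncomputable def cD (p q φ : ℝ) : ℝ := p^2+q^2-2*p*q*Real.cos φ
noncomputable def cg (p q u : ℝ) : ℝ := u^2/(Real.sqrt (p^2-u^2) * Real.sqrt (q^2-u^2))
noncomputable def ct (p q φ : ℝ) : ℝ := p*q*Real.sin φ / Real.sqrt (cD p q φ)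
noncomputable def cE (p q φ : ℝ) : ℝ :=
  -(p*q*(p-q*Real.cos φ)*(q-p*Real.cos φ))/(cD p q φ * Real.sqrt (cD p q φ))
noncomputable def ch (p q φ : ℝ) : ℝ := Real.sin φ^2/(cD p q φ * Real.sqrt (cD p q φ))





lemma cD_pos {p q : ℝ} (hp : 0 < p) (hq : 0 < q) (hne : p ≠ q) (φ : ℝ) : 0 < cD p q φ := by
  have h1 : 0 < (p - q)^2 := by
    have := sub_ne_zero.mpr hne
    positivity
  have h2 := Real.cos_le_one φ
  have h3 := mul_pos hp hq
  unfold cD; nlinarith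

lemma sqrtD_pos {p q : ℝ} (hp : 0 < p) (hq : 0 < q) (hne : p ≠ q) (φ : ℝ) :
    0 < Real.sqrt (cD p q φ) :=
  Real.sqrt_pos.mpr (cD_pos hp hq hne φ)

lemma cont_cD (p q : ℝ) : Continuous (cD p q) := by
  unfold cD; continuity

lemma cont_sqrtD (p q : ℝ) : Continuous (fun φ => Real.sqrt (cD p q φ)) :=
  (cont_cD p q).sqrt

lemma cont_ct {p q : ℝ} (hp : 0 < p) (hq : 0 < q) (hne : p ≠ q) : Continuous (ct p q) := by
  unfold ct
  exact (continuous_const.mul Real.continuous_sin).div (cont_sqrtD p q)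
    (fun φ => (sqrtD_pos hp hq hne φ).ne')

lemma cont_cE {p q : ℝ} (hp : 0 < p) (hq : 0 < q) (hne : p ≠ q) : Continuous (cE p q) := by
  unfold cE
  refine Continuous.div (by continuity) ((cont_cD p q).mul (cont_sqrtD p q)) ?_
  intro φ
  exact (mul_pos (cD_pos hp hq hne φ) (sqrtD_pos hp hq hne φ)).ne'

lemma cont_ch {p q : ℝ} (hp : 0 < p) (hq : 0 < q) (hne : p ≠ q) : Continuous (ch p q) := by
  unfold ch
  refine Continuous.div (by continuity) ((cont_cD p q).mul (cont_sqrtD p q)) ?_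
  intro φ
  exact (mul_pos (cD_pos hp hq hne φ) (sqrtD_pos hp hq hne φ)).ne'

lemma hasDerivAt_cD (p q φ : ℝ) : HasDerivAt (cD p q) (2*p*q*Real.sin φ) φ := by
  have h := (Real.hasDerivAt_cos φ).const_mul (2*p*q)
  have h2 := (hasDerivAt_const φ (p^2+q^2)).sub h
  exact h2.congr_deriv (by ring)

lemma hasDerivAt_sqrtD {p q : ℝ} (hp : 0 < p) (hq : 0 < q) (hne : p ≠ q) (φ : ℝ) :
    HasDerivAt (fun φ => Real.sqrt (cD p q φ))
      (p*q*Real.sin φ / Real.sqrt (cD p q φ)) φ := by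
  have h := (Real.hasDerivAt_sqrt (cD_pos hp hq hne φ).ne').comp φ (hasDerivAt_cD p q φ)
  refine h.congr_deriv ?_
  field_simp

lemma hasDerivAt_ct {p q : ℝ} (hp : 0 < p) (hq : 0 < q) (hne : p ≠ q) (φ : ℝ) :
    HasDerivAt (ct p q) (cE p q φ) φ := by
  have hs := sqrtD_pos hp hq hne φ
  have hD := cD_pos hp hq hne φ
  have h := ((Real.hasDerivAt_sin φ).const_mul (p*q)).div (hasDerivAt_sqrtD hp hq hne φ) hs.ne'
  refine h.congr_deriv ?_
  unfold cE
  set S := Real.sqrt (cD p q φ) with hS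
  have hsq : S^2 = cD p q φ := Real.sq_sqrt hD.le
  have hDdef : cD p q φ = p^2+q^2-2*p*q*Real.cos φ := rfl
  have hsin : Real.sin φ ^ 2 = 1 - Real.cos φ ^ 2 := Real.sin_sq φ
  have hS2 : S^2 = p^2+q^2-2*p*q*Real.cos φ := hsq.trans hDdef
  have e : p*q*Real.cos φ*S - p*q*Real.sin φ*(p*q*Real.sin φ/S)
      = -(p*q*(p-q*Real.cos φ)*(q-p*Real.cos φ))/S := by
    rw [eq_div_iff hs.ne', sub_mul, mul_assoc (p*q*Real.sin φ), div_mul_cancel₀ _ hs.ne']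
    linear_combination (p*q*Real.cos φ) * hS2 - p^2*q^2 * hsin
  rw [e, div_div, ← hsq]
  ring




lemma sq_sub_ct_left {p q : ℝ} (hp : 0 < p) (hq : 0 < q) (hne : p ≠ q) (φ : ℝ) :
    p^2 - ct p q φ^2 = p^2*(p - q*Real.cos φ)^2 / cD p q φ := by
  have hD := cD_pos hp hq hne φ
  have hsq : Real.sqrt (cD p q φ) ^ 2 = cD p q φ := Real.sq_sqrt hD.le
  have hsin : Real.sin φ ^ 2 = 1 - Real.cos φ ^ 2 := Real.sin_sq φ
  have hDdef : cD p q φ = p^2+q^2-2*p*q*Real.cos φ := rfl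
  unfold ct
  rw [div_pow, hsq, eq_div_iff hD.ne', sub_mul, div_mul_cancel₀ _ hD.ne', hDdef]
  linear_combination (-(p^2*q^2)) * hsin

lemma sq_sub_ct_right {p q : ℝ} (hp : 0 < p) (hq : 0 < q) (hne : p ≠ q) (φ : ℝ) :
    q^2 - ct p q φ^2 = q^2*(q - p*Real.cos φ)^2 / cD p q φ := by
  have hD := cD_pos hp hq hne φ
  have hsq : Real.sqrt (cD p q φ) ^ 2 = cD p q φ := Real.sq_sqrt hD.le
  have hsin : Real.sin φ ^ 2 = 1 - Real.cos φ ^ 2 := Real.sin_sq φ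
  have hDdef : cD p q φ = p^2+q^2-2*p*q*Real.cos φ := rfl
  unfold ct
  rw [div_pow, hsq, eq_div_iff hD.ne', sub_mul, div_mul_cancel₀ _ hD.ne', hDdef]
  linear_combination (-(p^2*q^2)) * hsin

lemma sqrt_left_b1 {p q φ : ℝ} (hp : 0 < p) (hq : 0 < q) (hne : p ≠ q) (hc : p < q*Real.cos φ) :
    Real.sqrt (p^2 - ct p q φ^2) = p*(q*Real.cos φ - p)/Real.sqrt (cD p q φ) := by
  have hD := cD_pos hp hq hne φ
  have hs := sqrtD_pos hp hq hne φ
  have hsq : Real.sqrt (cD p q φ)^2 = cD p q φ := Real.sq_sqrt hD.le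
  have key : p^2*(p - q*Real.cos φ)^2 / cD p q φ
      = (p*(q*Real.cos φ - p)/Real.sqrt (cD p q φ))^2 := by
    rw [div_pow, hsq]; ring
  have hnn : 0 ≤ p*(q*Real.cos φ - p)/Real.sqrt (cD p q φ) := by
    apply div_nonneg _ hs.le; nlinarith
  rw [sq_sub_ct_left hp hq hne φ, key, Real.sqrt_sq hnn]

lemma sqrt_left_b2 {p q φ : ℝ} (hp : 0 < p) (hq : 0 < q) (hne : p ≠ q) (hc : q*Real.cos φ < p) :
    Real.sqrt (p^2 - ct p q φ^2) = p*(p - q*Real.cos φ)/Real.sqrt (cD p q φ) := by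
  have hD := cD_pos hp hq hne φ
  have hs := sqrtD_pos hp hq hne φ
  have hsq : Real.sqrt (cD p q φ)^2 = cD p q φ := Real.sq_sqrt hD.le
  have key : p^2*(p - q*Real.cos φ)^2 / cD p q φ
      = (p*(p - q*Real.cos φ)/Real.sqrt (cD p q φ))^2 := by
    rw [div_pow, hsq]; ring
  have hnn : 0 ≤ p*(p - q*Real.cos φ)/Real.sqrt (cD p q φ) := by
    apply div_nonneg _ hs.le; nlinarith
  rw [sq_sub_ct_left hp hq hne φ, key, Real.sqrt_sq hnn]

lemma sqrt_right {p q φ : ℝ} (hp : 0 < p) (hq : 0 < q) (hne : p ≠ q) (hc : p*Real.cos φ < q) :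
    Real.sqrt (q^2 - ct p q φ^2) = q*(q - p*Real.cos φ)/Real.sqrt (cD p q φ) := by
  have hD := cD_pos hp hq hne φ
  have hs := sqrtD_pos hp hq hne φ
  have hsq : Real.sqrt (cD p q φ)^2 = cD p q φ := Real.sq_sqrt hD.le
  have key : q^2*(q - p*Real.cos φ)^2 / cD p q φ
      = (q*(q - p*Real.cos φ)/Real.sqrt (cD p q φ))^2 := by
    rw [div_pow, hsq]; ring
  have hnn : 0 ≤ q*(q - p*Real.cos φ)/Real.sqrt (cD p q φ) := by
    apply div_nonneg _ hs.le; nlinarith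
  rw [sq_sub_ct_right hp hq hne φ, key, Real.sqrt_sq hnn]

lemma integrand_b1 {p q φ : ℝ} (hp : 0 < p) (hq : 0 < q) (hne : p ≠ q)
    (hc : p < q*Real.cos φ) (hc2 : p*Real.cos φ < q) :
    cE p q φ * cg p q (ct p q φ) = p^2*q^2 * ch p q φ := by
  have hD := cD_pos hp hq hne φ
  have hs := sqrtD_pos hp hq hne φ
  have hsq : Real.sqrt (cD p q φ)^2 = cD p q φ := Real.sq_sqrt hD.le
  unfold cE ch
  rw [show cg p q (ct p q φ) = ct p q φ^2 /
      (Real.sqrt (p^2 - ct p q φ^2) * Real.sqrt (q^2 - ct p q φ^2)) from rfl,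
    sqrt_left_b1 hp hq hne hc, sqrt_right hp hq hne hc2]
  unfold ct
  set S := Real.sqrt (cD p q φ) with hS
  have h1 : q*Real.cos φ - p ≠ 0 := by linarith
  have h2 : q - p*Real.cos φ ≠ 0 := by linarith
  field_simp
  ring_nf

lemma integrand_b2 {p q φ : ℝ} (hp : 0 < p) (hq : 0 < q) (hne : p ≠ q)
    (hc : q*Real.cos φ < p) (hc2 : p*Real.cos φ < q) :
    cE p q φ * cg p q (ct p q φ) = -(p^2*q^2) * ch p q φ := by
  have hD := cD_pos hp hq hne φ
  have hs := sqrtD_pos hp hq hne φ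
  have hsq : Real.sqrt (cD p q φ)^2 = cD p q φ := Real.sq_sqrt hD.le
  unfold cE ch
  rw [show cg p q (ct p q φ) = ct p q φ^2 /
      (Real.sqrt (p^2 - ct p q φ^2) * Real.sqrt (q^2 - ct p q φ^2)) from rfl,
    sqrt_left_b2 hp hq hne hc, sqrt_right hp hq hne hc2]
  unfold ct
  set S := Real.sqrt (cD p q φ) with hS
  have h1 : p - q*Real.cos φ ≠ 0 := by linarith
  have h2 : q - p*Real.cos φ ≠ 0 := by linarith
  field_simp



lemma cg_nonneg (p q u : ℝ) : 0 ≤ cg p q u := by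
  unfold cg
  positivity

lemma cg_integrableOn {p q : ℝ} (hp : 0 < p) (hpq : p < q) :
    IntegrableOn (cg p q) (Icc 0 p) := by
  have hq : 0 < q := hp.trans hpq
  have hqp : (0:ℝ) < q^2 - p^2 := by nlinarith
  have hmeas : Measurable (cg p q) := by
    unfold cg
    exact (measurable_id.pow_const 2).div
      (((continuous_const.sub (continuous_pow 2)).sqrt.mul
        (continuous_const.sub (continuous_pow 2)).sqrt).measurable)
  set C := p^2 / (Real.sqrt p * Real.sqrt (q^2-p^2)) with hC
  have hCpos : 0 < C := by positivity
  have hbnd : IntegrableOn (fun u => C * (p-u) ^ (-(1/2):ℝ)) (Icc 0 p) := by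
    have h1 : IntervalIntegrable (fun x : ℝ => x ^ (-(1/2):ℝ)) volume 0 p :=
      intervalIntegral.intervalIntegrable_rpow' (by norm_num)
    have h2 := (h1.comp_sub_left p).symm
    simp only [sub_zero, sub_self] at h2
    have h3 := h2.const_mul C
    rw [intervalIntegrable_iff_integrableOn_Icc_of_le hp.le] at h3
    exact h3
  refine Integrable.mono' hbnd hmeas.aestronglyMeasurable ?_
  refine (ae_restrict_iff' measurableSet_Icc).mpr (Filter.Eventually.of_forall ?_)
  intro u hu
  obtain ⟨hu0, hup⟩ := hu
  rcases eq_or_lt_of_le hup with h | h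
  · have : cg p q u = 0 := by
      unfold cg
      rw [h, sub_self, Real.sqrt_zero, zero_mul, div_zero]
    rw [this, h, sub_self, Real.zero_rpow (by norm_num), mul_zero, norm_zero]
  · have hpu : 0 < p - u := by linarith
    have e1 : Real.sqrt p * Real.sqrt (p-u) ≤ Real.sqrt (p^2-u^2) := by
      rw [← Real.sqrt_mul hp.le]
      apply Real.sqrt_le_sqrt
      nlinarith
    have e2 : Real.sqrt (q^2-p^2) ≤ Real.sqrt (q^2-u^2) := by
      apply Real.sqrt_le_sqrt
      nlinarith
    have hd1 : 0 < Real.sqrt p * Real.sqrt (p-u) := by positivity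
    have hd2 : 0 < Real.sqrt (q^2-p^2) := Real.sqrt_pos.mpr hqp
    have key : cg p q u ≤ p^2 / (Real.sqrt p * Real.sqrt (p-u) * Real.sqrt (q^2-p^2)) := by
      unfold cg
      apply div_le_div₀ (by positivity) (by nlinarith) (by positivity) ?_
      exact mul_le_mul e1 e2 hd2.le (Real.sqrt_nonneg _)
    rw [Real.norm_of_nonneg (cg_nonneg p q u)]
    refine key.trans (le_of_eq ?_)
    rw [Real.rpow_neg hpu.le]
    rw [show ((p-u):ℝ) ^ ((1:ℝ)/2) = Real.sqrt (p-u) from (Real.sqrt_eq_rpow _).symm, hC]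
    field_simp

lemma arccos_facts {p q : ℝ} (hp : 0 < p) (hpq : p < q) :
    Real.cos (Real.arccos (p/q)) = p/q ∧ 0 < Real.arccos (p/q) ∧ Real.arccos (p/q) < π := by
  have hq : 0 < q := hp.trans hpq
  have h1 : 0 < p/q := div_pos hp hq
  have h2 : p/q < 1 := (div_lt_one hq).2 hpq
  refine ⟨Real.cos_arccos (by linarith) h2.le, Real.arccos_pos.2 h2, ?_⟩
  calc Real.arccos (p/q) < π/2 := Real.arccos_lt_pi_div_two.2 h1
    _ < π := by linarith [Real.pi_pos]

lemma ct_endpoint {p q : ℝ} (hp : 0 < p) (hpq : p < q) :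
    ct p q (Real.arccos (p/q)) = p := by
  have hq : 0 < q := hp.trans hpq
  have hqp : (0:ℝ) < q^2 - p^2 := by nlinarith
  have hcos := (arccos_facts hp hpq).1
  have hDval : cD p q (Real.arccos (p/q)) = q^2 - p^2 := by
    unfold cD
    rw [hcos]
    field_simp
    ring
  have hsin : Real.sin (Real.arccos (p/q)) = Real.sqrt (1-(p/q)^2) := Real.sin_arccos _
  unfold ct
  rw [hDval, hsin, show 1-(p/q)^2 = (q^2-p^2)/q^2 by field_simp,
    Real.sqrt_div hqp.le, Real.sqrt_sq hq.le]
  field_simp [Real.sqrt_pos.mpr hqp |>.ne']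

lemma ct_zero (p q : ℝ) : ct p q 0 = 0 := by simp [ct]

lemma ct_pi (p q : ℝ) : ct p q π = 0 := by simp [ct]



section
variable {p q : ℝ}

-- bounds on ct
lemma ct_nonneg (hp : 0 < p) (hq : 0 < q) (hne : p ≠ q) {x : ℝ}
    (h0 : 0 ≤ x) (hπ : x ≤ π) : 0 ≤ ct p q x := by
  unfold ct
  have := Real.sin_nonneg_of_nonneg_of_le_pi h0 hπ
  positivity

lemma ct_pos (hp : 0 < p) (hq : 0 < q) (hne : p ≠ q) {x : ℝ}
    (h0 : 0 < x) (hπ : x < π) : 0 < ct p q x := by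
  unfold ct
  have := Real.sin_pos_of_pos_of_lt_pi h0 hπ
  have := sqrtD_pos hp hq hne x
  positivity

lemma ct_le (hp : 0 < p) (hq : 0 < q) (hne : p ≠ q) {x : ℝ}
    (h0 : 0 ≤ x) (hπ : x ≤ π) : ct p q x ≤ p := by
  have h1 := sq_sub_ct_left hp hq hne x
  have hD := cD_pos hp hq hne x
  have h2 : 0 ≤ p^2 - ct p q x^2 := by
    rw [h1]; positivity
  have h3 := ct_nonneg hp hq hne h0 hπ
  nlinarith

lemma ct_lt (hp : 0 < p) (hq : 0 < q) (hne : p ≠ q) {x : ℝ}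
    (h0 : 0 ≤ x) (hπ : x ≤ π) (hc : q * Real.cos x ≠ p) : ct p q x < p := by
  have h1 := sq_sub_ct_left hp hq hne x
  have hD := cD_pos hp hq hne x
  have hc' : p - q * Real.cos x ≠ 0 := by intro h; apply hc; linarith
  have h2 : 0 < p^2 - ct p q x^2 := by
    rw [h1]; positivity
  have h3 := ct_nonneg hp hq hne h0 hπ
  nlinarith

lemma cg_contOn (hp : 0 < p) (hpq : p < q) : ContinuousOn (cg p q) (Ioo 0 p) := by
  have hq : 0 < q := hp.trans hpq
  unfold cg
  apply ContinuousOn.div ((continuous_pow 2).continuousOn)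
    (((continuous_const.sub (continuous_pow 2)).sqrt.mul
      (continuous_const.sub (continuous_pow 2)).sqrt).continuousOn)
  intro u hu
  have h1 : 0 < p^2 - u^2 := by nlinarith [hu.1, hu.2]
  have h2 : 0 < q^2 - u^2 := by nlinarith [hu.1, hu.2]
  exact (mul_pos (Real.sqrt_pos.mpr h1) (Real.sqrt_pos.mpr h2)).ne'

lemma ae_ne (c : ℝ) : ∀ᵐ x : ℝ, x ≠ c := by
  rw [MeasureTheory.ae_iff]
  simp only [not_not, Set.setOf_eq_eq_singleton]
  exact Real.volume_singleton

lemma sub_b1 (hp : 0 < p) (hpq : p < q) :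
    p^2*q^2 * ∫ x in (0:ℝ)..Real.arccos (p/q), ch p q x = ∫ u in (0:ℝ)..p, cg p q u := by
  have hq : 0 < q := hp.trans hpq
  have hne : p ≠ q := ne_of_lt hpq
  set φ₀ := Real.arccos (p/q) with hφ₀
  obtain ⟨hcos, hφpos, hφpi⟩ := arccos_facts hp hpq
  have hmin : min (0:ℝ) φ₀ = 0 := min_eq_left hφpos.le
  have hmax : max (0:ℝ) φ₀ = φ₀ := max_eq_right hφpos.le
  have hcosx : ∀ x ∈ Ioo (0:ℝ) φ₀, p < q * Real.cos x := by
    intro x hx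
    have h1 : Real.cos φ₀ < Real.cos x :=
      Real.strictAntiOn_cos ⟨hx.1.le, hx.2.le.trans hφpi.le⟩ ⟨hφpos.le, hφpi.le⟩ hx.2
    rw [hcos] at h1
    calc p = q * (p/q) := by field_simp
      _ < q * Real.cos x := by apply mul_lt_mul_of_pos_left h1 hq
  -- change of variables
  have key : (∫ x in (0:ℝ)..φ₀, cE p q x • (cg p q ∘ ct p q) x)
      = ∫ u in (ct p q 0)..(ct p q φ₀), cg p q u := by
    apply intervalIntegral.integral_comp_smul_deriv''' ((cont_ct hp hq hne).continuousOn)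
    · intro x _
      exact (hasDerivAt_ct hp hq hne x).hasDerivWithinAt
    · rw [hmin, hmax]
      apply (cg_contOn hp hpq).mono
      rintro u ⟨x, hx, rfl⟩
      exact ⟨ct_pos hp hq hne hx.1 (hx.2.trans hφpi),
        ct_lt hp hq hne hx.1.le (hx.2.le.trans hφpi.le) (by have := hcosx x hx; intro h; linarith)⟩
    · apply (cg_integrableOn hp hpq).mono_set
      rintro u ⟨x, hx, rfl⟩
      rw [uIcc_of_le hφpos.le] at hx
      exact ⟨ct_nonneg hp hq hne hx.1 (hx.2.trans hφpi.le),
        ct_le hp hq hne hx.1 (hx.2.trans hφpi.le)⟩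
    · -- integrability of the substituted integrand
      rw [uIcc_of_le hφpos.le]
      apply ((continuous_const.mul (cont_ch hp hq hne) : Continuous fun x => (p^2*q^2) * ch p q x).integrableOn_Icc).congr_fun_ae
      refine ((ae_restrict_iff' measurableSet_Icc).mpr ?_)
      filter_upwards [ae_ne φ₀] with x hxne hx
      have hxIoo : x ∈ Ioo (0:ℝ) φ₀ ∨ x = 0 := by
        rcases eq_or_lt_of_le hx.1 with h | h
        · right; exact h.symm
        · left; exact ⟨h, lt_of_le_of_ne hx.2 hxne⟩
      rcases hxIoo with h | h
      · have hc := hcosx x h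
        have hc2 : p * Real.cos x < q := by
          nlinarith [Real.cos_le_one x, Real.neg_one_le_cos x]
        simp only [smul_eq_mul, Function.comp_apply]
        rw [integrand_b1 hp hq hne hc hc2]
        rfl
      · subst h
        simp [ct_zero, cg, ch, smul_eq_mul]
  rw [ct_zero, ct_endpoint hp hpq] at key
  rw [← key, ← intervalIntegral.integral_const_mul]
  apply intervalIntegral.integral_congr_ae
  filter_upwards [ae_ne φ₀] with x hxne hx
  rw [uIoc_of_le hφpos.le] at hx
  have hxlt : x < φ₀ := lt_of_le_of_ne hx.2 hxne
  have hc := hcosx x ⟨hx.1, hxlt⟩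
  have hc2 : p * Real.cos x < q := by
    nlinarith [Real.cos_le_one x, Real.neg_one_le_cos x]
  simp only [smul_eq_mul, Function.comp_apply]
  rw [integrand_b1 hp hq hne hc hc2]

lemma sub_b2 (hp : 0 < p) (hpq : p < q) :
    p^2*q^2 * ∫ x in Real.arccos (p/q)..π, ch p q x = ∫ u in (0:ℝ)..p, cg p q u := by
  have hq : 0 < q := hp.trans hpq
  have hne : p ≠ q := ne_of_lt hpq
  set φ₀ := Real.arccos (p/q) with hφ₀
  obtain ⟨hcos, hφpos, hφpi⟩ := arccos_facts hp hpq
  have hmin : min φ₀ π = φ₀ := min_eq_left hφpi.le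
  have hmax : max φ₀ π = π := max_eq_right hφpi.le
  have hcosx : ∀ x, φ₀ < x → x ≤ π → q * Real.cos x < p := by
    intro x hx1 hx2
    have h1 : Real.cos x < Real.cos φ₀ :=
      Real.strictAntiOn_cos ⟨hφpos.le, hφpi.le⟩ ⟨(hφpos.trans hx1).le, hx2⟩ hx1
    rw [hcos] at h1
    calc q * Real.cos x < q * (p/q) := by apply mul_lt_mul_of_pos_left h1 hq
      _ = p := by field_simp
  have key : (∫ x in φ₀..π, cE p q x • (cg p q ∘ ct p q) x)
      = ∫ u in (ct p q φ₀)..(ct p q π), cg p q u := by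
    apply intervalIntegral.integral_comp_smul_deriv''' ((cont_ct hp hq hne).continuousOn)
    · intro x _
      exact (hasDerivAt_ct hp hq hne x).hasDerivWithinAt
    · rw [hmin, hmax]
      apply (cg_contOn hp hpq).mono
      rintro u ⟨x, hx, rfl⟩
      refine ⟨ct_pos hp hq hne (hφpos.trans hx.1) hx.2, ?_⟩
      exact ct_lt hp hq hne (hφpos.trans hx.1).le hx.2.le
        (by have := hcosx x hx.1 hx.2.le; intro h; linarith)
    · apply (cg_integrableOn hp hpq).mono_set
      rintro u ⟨x, hx, rfl⟩
      rw [uIcc_of_le hφpi.le] at hx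
      exact ⟨ct_nonneg hp hq hne (hφpos.le.trans hx.1) hx.2,
        ct_le hp hq hne (hφpos.le.trans hx.1) hx.2⟩
    · rw [uIcc_of_le hφpi.le]
      apply ((continuous_const.mul (cont_ch hp hq hne) : Continuous fun x => (-(p^2*q^2)) * ch p q x).integrableOn_Icc).congr_fun_ae
      refine ((ae_restrict_iff' measurableSet_Icc).mpr ?_)
      filter_upwards [ae_ne φ₀] with x hxne hx
      have hxgt : φ₀ < x := lt_of_le_of_ne hx.1 (Ne.symm hxne)
      have hc := hcosx x hxgt hx.2
      have hc2 : p * Real.cos x < q := by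
        nlinarith [Real.cos_le_one x, Real.neg_one_le_cos x]
      simp only [smul_eq_mul, Function.comp_apply]
      rw [integrand_b2 hp hq hne hc hc2]
      rfl
  rw [ct_pi, ct_endpoint hp hpq] at key
  have key2 : (∫ x in φ₀..π, cE p q x • (cg p q ∘ ct p q) x)
      = ∫ x in φ₀..π, -(p^2*q^2) * ch p q x := by
    apply intervalIntegral.integral_congr_ae
    filter_upwards [ae_ne φ₀] with x hxne hx
    rw [uIoc_of_le hφpi.le] at hx
    have hc := hcosx x hx.1 hx.2
    have hc2 : p * Real.cos x < q := by
      nlinarith [Real.cos_le_one x, Real.neg_one_le_cos x]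
    simp only [smul_eq_mul, Function.comp_apply]
    rw [integrand_b2 hp hq hne hc hc2]
  rw [key2, intervalIntegral.integral_const_mul,
    show (∫ u in p..(0:ℝ), cg p q u) = -∫ u in (0:ℝ)..p, cg p q u from
      intervalIntegral.integral_symm 0 p] at key
  linarith [key]
end



section
variable {p q : ℝ}

lemma cD_symm (p q φ : ℝ) : cD q p φ = cD p q φ := by unfold cD; ring

lemma ch_symm (p q φ : ℝ) : ch q p φ = ch p q φ := by unfold ch; rw [cD_symm]

lemma cg_symm (p q u : ℝ) : cg q p u = cg p q u := by unfold cg; rw [mul_comm]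

lemma core_lt (hp : 0 < p) (hpq : p < q) :
    p^2*q^2 * ∫ x in (0:ℝ)..π, ch p q x = 2 * ∫ u in (0:ℝ)..p, cg p q u := by
  have hq : 0 < q := hp.trans hpq
  have hne : p ≠ q := ne_of_lt hpq
  have hint : ∀ a b : ℝ, IntervalIntegrable (ch p q) volume a b :=
    fun a b => (cont_ch hp hq hne).intervalIntegrable a b
  have hsplit := intervalIntegral.integral_add_adjacent_intervals
    (a := 0) (b := Real.arccos (p/q)) (c := π) (hint _ _) (hint _ _)
  have h1 := sub_b1 hp hpq
  have h2 := sub_b2 hp hpq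
  rw [← hsplit]
  ring_nf
  ring_nf at h1 h2
  linarith

lemma core (hp : 0 < p) (hq : 0 < q) (hne : p ≠ q) :
    p^2*q^2 * ∫ x in (0:ℝ)..π, ch p q x = 2 * ∫ u in (0:ℝ)..(min p q), cg p q u := by
  rcases lt_or_gt_of_ne hne with h | h
  · rw [min_eq_left h.le]; exact core_lt hp h
  · rw [min_eq_right h.le]
    have := core_lt hq h
    simp only [ch_symm, cg_symm] at this
    linarith [this]

lemma hasDerivAt_invSqrtD (hp : 0 < p) (hq : 0 < q) (hne : p ≠ q) (φ : ℝ) :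
    HasDerivAt (fun φ => (Real.sqrt (cD p q φ))⁻¹)
      (-(p*q*Real.sin φ)/(cD p q φ * Real.sqrt (cD p q φ))) φ := by
  have hs := sqrtD_pos hp hq hne φ
  have hD := cD_pos hp hq hne φ
  have h := (hasDerivAt_sqrtD hp hq hne φ).inv hs.ne'
  refine h.congr_deriv ?_
  have hsq : Real.sqrt (cD p q φ)^2 = cD p q φ := Real.sq_sqrt hD.le
  rw [hsq]
  ring

lemma ibp (hp : 0 < p) (hq : 0 < q) (hne : p ≠ q) :
    ∫ φ in (0:ℝ)..(2*π), Real.cos φ / Real.sqrt (cD p q φ)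
      = p*q * ∫ φ in (0:ℝ)..(2*π), ch p q φ := by
  have hs := fun φ => sqrtD_pos hp hq hne φ
  have hD := fun φ => cD_pos hp hq hne φ
  have hu'cont : Continuous (fun φ => -(p*q*Real.sin φ)/(cD p q φ * Real.sqrt (cD p q φ))) := by
    apply Continuous.div (by continuity) ((cont_cD p q).mul (cont_sqrtD p q))
    intro φ; exact (mul_pos (hD φ) (hs φ)).ne'
  have h := intervalIntegral.integral_mul_deriv_eq_deriv_mul (a := (0:ℝ)) (b := 2*π)
    (u := fun φ => (Real.sqrt (cD p q φ))⁻¹)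
    (u' := fun φ => -(p*q*Real.sin φ)/(cD p q φ * Real.sqrt (cD p q φ)))
    (v := Real.sin) (v' := Real.cos)
    (fun x _ => hasDerivAt_invSqrtD hp hq hne x)
    (fun x _ => Real.hasDerivAt_sin x)
    (hu'cont.intervalIntegrable _ _)
    (Real.continuous_cos.intervalIntegrable _ _)
  simp only [Real.sin_two_pi, Real.sin_zero, mul_zero, zero_sub, zero_mul, sub_zero, zero_add,
    mul_zero, sub_self] at h
  have e1 : ∀ x : ℝ, Real.cos x / Real.sqrt (cD p q x) = (Real.sqrt (cD p q x))⁻¹ * Real.cos x :=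
    fun x => by rw [div_eq_mul_inv, mul_comm]
  have e2 : ∀ x : ℝ, -(p*q*Real.sin x)/(cD p q x * Real.sqrt (cD p q x)) * Real.sin x
      = -(p*q) * ch p q x := fun x => by unfold ch; ring
  simp_rw [e1, h, e2]
  rw [intervalIntegral.integral_const_mul]
  ring

lemma odd_part (hp : 0 < p) (hq : 0 < q) (hne : p ≠ q) :
    ∫ u in (0:ℝ)..(2*π), Real.sin u / Real.sqrt (cD p q u) = 0 := by
  set f := fun u => Real.sin u / Real.sqrt (cD p q u) with hf
  have hper : Function.Periodic f (2*π) := by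
    intro u
    simp only [hf]
    have : cD p q (u + 2*π) = cD p q u := by unfold cD; rw [Real.cos_add_two_pi]
    rw [this, Real.sin_add_two_pi]
  have hint : ∀ a b : ℝ, IntervalIntegrable f volume a b := by
    intro a b
    apply Continuous.intervalIntegrable
    exact Real.continuous_sin.div (cont_sqrtD p q) (fun x => (sqrtD_pos hp hq hne x).ne')
  have h1 : ∫ u in (0:ℝ)..(2*π), f u = ∫ u in (-π)..π, f u := by
    have := hper.intervalIntegral_add_eq 0 (-π)
    rw [zero_add] at this
    rw [this, show -π + 2*π = π by ring]
  have h2 : ∫ u in (-π)..(0:ℝ), f u = - ∫ u in (0:ℝ)..π, f u := by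
    have hneg : ∀ x : ℝ, f (-x) = - f x := by
      intro x
      simp only [hf]
      have : cD p q (-x) = cD p q x := by unfold cD; rw [Real.cos_neg]
      rw [this, Real.sin_neg, neg_div]
    have := intervalIntegral.integral_comp_neg (a := (0:ℝ)) (b := π) (f := f)
    rw [neg_zero] at this
    rw [← this]
    simp_rw [hneg]
    rw [intervalIntegral.integral_neg]
  have h3 := intervalIntegral.integral_add_adjacent_intervals
    (a := -π) (b := (0:ℝ)) (c := π) (hint _ _) (hint _ _)
  rw [h1, ← h3, h2]
  ring

lemma even_part (hp : 0 < p) (hq : 0 < q) (hne : p ≠ q) :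
    ∫ u in (0:ℝ)..(2*π), ch p q u = 2 * ∫ u in (0:ℝ)..π, ch p q u := by
  set f := ch p q with hf
  have hper : Function.Periodic f (2*π) := by
    intro u
    simp only [hf]
    unfold ch
    have : cD p q (u + 2*π) = cD p q u := by unfold cD; rw [Real.cos_add_two_pi]
    rw [this, Real.sin_add_two_pi]
  have hint : ∀ a b : ℝ, IntervalIntegrable f volume a b :=
    fun a b => (cont_ch hp hq hne).intervalIntegrable a b
  have h1 : ∫ u in (0:ℝ)..(2*π), f u = ∫ u in (-π)..π, f u := by
    have := hper.intervalIntegral_add_eq 0 (-π)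
    rw [zero_add] at this
    rw [this, show -π + 2*π = π by ring]
  have h2 : ∫ u in (-π)..(0:ℝ), f u = ∫ u in (0:ℝ)..π, f u := by
    have hneg : ∀ x : ℝ, f (-x) = f x := by
      intro x
      simp only [hf]
      unfold ch
      have : cD p q (-x) = cD p q x := by unfold cD; rw [Real.cos_neg]
      rw [this, Real.sin_neg]
      ring_nf
    have := intervalIntegral.integral_comp_neg (a := (0:ℝ)) (b := π) (f := f)
    rw [neg_zero] at this
    rw [← this]
    simp_rw [hneg]
  have h3 := intervalIntegral.integral_add_adjacent_intervals
    (a := -π) (b := (0:ℝ)) (c := π) (hint _ _) (hint _ _)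
  rw [h1, ← h3, h2]
  ring

lemma shift (hp : 0 < p) (hq : 0 < q) (hne : p ≠ q) (φ' : ℝ) :
    ∫ φ in (0:ℝ)..(2*π), Real.cos φ / Real.sqrt (cD p q (φ - φ'))
      = Real.cos φ' * ∫ φ in (0:ℝ)..(2*π), Real.cos φ / Real.sqrt (cD p q φ) := by
  set f := fun u => Real.cos (u + φ') / Real.sqrt (cD p q u) with hf
  have hs := fun φ => sqrtD_pos hp hq hne φ
  have hcont : Continuous f :=
    (Real.continuous_cos.comp (continuous_id.add continuous_const)).div (cont_sqrtD p q)
      (fun x => (hs x).ne')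
  have step1 : ∫ φ in (0:ℝ)..(2*π), Real.cos φ / Real.sqrt (cD p q (φ - φ'))
      = ∫ φ in (0:ℝ)..(2*π), f (φ - φ') := by
    apply intervalIntegral.integral_congr
    intro x _
    simp only [hf, sub_add_cancel]
  have step2 : ∫ φ in (0:ℝ)..(2*π), f (φ - φ')
      = ∫ φ in ((0:ℝ)-φ')..(2*π-φ'), f φ := intervalIntegral.integral_comp_sub_right f φ'
  have hper : Function.Periodic f (2*π) := by
    intro u
    simp only [hf]
    have : cD p q (u + 2*π) = cD p q u := by unfold cD; rw [Real.cos_add_two_pi]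
    rw [this, show u + 2*π + φ' = (u + φ') + 2*π by ring, Real.cos_add_two_pi]
  have step3 : ∫ φ in ((0:ℝ)-φ')..(2*π-φ'), f φ = ∫ φ in (0:ℝ)..(2*π), f φ := by
    rw [show (0:ℝ)-φ' = -φ' by ring, show 2*π-φ' = -φ' + 2*π by ring]
    have := hper.intervalIntegral_add_eq (-φ') 0
    rw [zero_add] at this
    exact this
  have step4 : ∫ φ in (0:ℝ)..(2*π), f φ
      = Real.cos φ' * (∫ φ in (0:ℝ)..(2*π), Real.cos φ / Real.sqrt (cD p q φ))
        - Real.sin φ' * (∫ φ in (0:ℝ)..(2*π), Real.sin φ / Real.sqrt (cD p q φ)) := by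
    have e : ∀ x : ℝ, f x = Real.cos φ' * (Real.cos x / Real.sqrt (cD p q x))
        - Real.sin φ' * (Real.sin x / Real.sqrt (cD p q x)) := by
      intro x
      simp only [hf]
      rw [Real.cos_add]
      ring
    simp_rw [e]
    rw [intervalIntegral.integral_sub, intervalIntegral.integral_const_mul,
      intervalIntegral.integral_const_mul]
    · apply Continuous.intervalIntegrable
      exact continuous_const.mul (Real.continuous_cos.div (cont_sqrtD p q) (fun x => (hs x).ne'))
    · apply Continuous.intervalIntegrable
      exact continuous_const.mul (Real.continuous_sin.div (cont_sqrtD p q) (fun x => (hs x).ne'))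
  rw [step1, step2, step3, step4, odd_part hp hq hne]
  ring
end



theorem copson_formula (ρ r : ℝ) (hρ : 0 < ρ) (hr : 0 < r) (hne : ρ ≠ r) (φ' : ℝ) :
    ∫ φ in (0:ℝ)..(2 * π),
        Real.cos φ / Real.sqrt (ρ ^ 2 + r ^ 2 - 2 * r * ρ * Real.cos (φ - φ')) =
      (4 * Real.cos φ' / (ρ * r)) *
        ∫ t in (0:ℝ)..(min ρ r),
          t ^ 2 / (Real.sqrt (ρ ^ 2 - t ^ 2) * Real.sqrt (r ^ 2 - t ^ 2)) := by
  have hD : ∀ x : ℝ, ρ^2+r^2-2*r*ρ*Real.cos x = cD ρ r x := fun x => by unfold cD; ring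
  have L1 : (∫ φ in (0:ℝ)..(2*π), Real.cos φ / Real.sqrt (ρ^2+r^2-2*r*ρ*Real.cos (φ-φ')))
      = ∫ φ in (0:ℝ)..(2*π), Real.cos φ / Real.sqrt (cD ρ r (φ-φ')) := by
    apply intervalIntegral.integral_congr
    intro x _
    show Real.cos x / Real.sqrt (ρ^2+r^2-2*r*ρ*Real.cos (x-φ'))
      = Real.cos x / Real.sqrt (cD ρ r (x-φ'))
    rw [hD]
  rw [L1]
  show _ = (4 * Real.cos φ' / (ρ * r)) * ∫ t in (0:ℝ)..(min ρ r), cg ρ r t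
  rw [shift hρ hr hne φ', ibp hρ hr hne, even_part hρ hr hne]
  have hc := core hρ hr hne
  rw [show (∫ t in (0:ℝ)..(min ρ r), cg ρ r t) = ρ^2*r^2*(∫ x in (0:ℝ)..π, ch ρ r x)/2 by
    linarith [hc]]
  field_simp
  ring
end

section
/- The triple integral 2 ∫₀¹ t² ( ∫_t¹ ρ/√(ρ² − t²) ( ∫_ρ¹ r/√(r² − t²) dr ) dρ ) dt equals 2/15. -/
/-!
Write `s(ρ) = √(ρ² - t²)`, so that `s' = ρ / s`. The innermost integral is `s(1) - s(ρ)`, hence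
the middle integrand is `s'·(s(1) - s)`, the derivative of `-(s(1) - s)² / 2`; the middle
integral is therefore `s(1)² / 2 = (1 - t²) / 2`, and `2 ∫₀¹ t² (1 - t²) / 2 dt = 2 / 15`.
The middle integral is improper at `ρ = t`, where `s'` blows up; integrability comes for free
because `s'·(s(1) - s)` is a nonnegative derivative.
-/

open MeasureTheory Real Set intervalIntegral

theorem hasDerivAt_sqrt_sq_sub {t x : ℝ} (hx : t ^ 2 < x ^ 2) :
    HasDerivAt (fun r ↦ √(r ^ 2 - t ^ 2)) (x / √(x ^ 2 - t ^ 2)) x := by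
  refine (((hasDerivAt_pow 2 x).sub_const (t ^ 2)).sqrt (sub_pos.2 hx).ne').congr_deriv ?_
  field_simp
  ring

theorem integral_div_sqrt_sq_sub {t a b : ℝ} (hta : |t| < a) (hab : a ≤ b) :
    ∫ r in a..b, r / √(r ^ 2 - t ^ 2) = √(b ^ 2 - t ^ 2) - √(a ^ 2 - t ^ 2) := by
  have hsq : ∀ x ∈ uIcc a b, t ^ 2 < x ^ 2 := by
    intro x hx
    rw [uIcc_of_le hab] at hx
    exact sq_lt_sq' (by linarith [neg_abs_le t, hx.1]) (by linarith [le_abs_self t, hx.1])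
  refine integral_eq_sub_of_hasDerivAt (fun x hx ↦ hasDerivAt_sqrt_sq_sub (hsq x hx)) ?_
  refine (continuousOn_id.div (by fun_prop) fun x hx ↦ ?_).intervalIntegrable
  exact (Real.sqrt_pos.2 (sub_pos.2 (hsq x hx))).ne'

theorem integral_deriv_mul_sub {f f' : ℝ → ℝ} {a b : ℝ} (hab : a ≤ b)
    (hf : ContinuousOn f (Icc a b)) (hff' : ∀ x ∈ Ioo a b, HasDerivAt f (f' x) x)
    (hf' : ∀ x ∈ Ioo a b, 0 ≤ f' x) :
    ∫ x in a..b, f' x * (f b - f x) = (f b - f a) ^ 2 / 2 := by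
  have hmono : MonotoneOn f (Icc a b) := by
    refine monotoneOn_of_hasDerivWithinAt_nonneg (f' := f') (convex_Icc a b) hf ?_ ?_ <;>
      rw [interior_Icc]
    exacts [fun x hx ↦ (hff' x hx).hasDerivWithinAt, hf']
  set F : ℝ → ℝ := fun x ↦ -(f b - f x) ^ 2 / 2
  have hF : ∀ x ∈ Ioo a b, HasDerivAt F (f' x * (f b - f x)) x := fun x hx ↦
    (((hff' x hx).const_sub (f b)).pow 2).neg.div_const 2 |>.congr_deriv (by ring)
  have hF' : ∀ x ∈ Ioo a b, 0 ≤ f' x * (f b - f x) := fun x hx ↦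
    mul_nonneg (hf' x hx) (sub_nonneg.2 (hmono (Ioo_subset_Icc_self hx) ⟨hab, le_rfl⟩ hx.2.le))
  have hFcont : ContinuousOn F (Icc a b) := by fun_prop
  rw [integral_eq_sub_of_hasDeriv_right_of_le hab hFcont
    (fun x hx ↦ (hF x hx).hasDerivWithinAt)
    ((intervalIntegrable_iff_integrableOn_Ioc_of_le hab).2
      (integrableOn_deriv_of_nonneg hFcont hF hF'))]
  simp only [F]
  ring

theorem integral_mul_integral_div_sqrt_sq_sub {t : ℝ} (ht : 0 ≤ t) (ht1 : t ≤ 1) :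
    ∫ ρ in t..1, ρ / √(ρ ^ 2 - t ^ 2) * ∫ r in ρ..1, r / √(r ^ 2 - t ^ 2) = (1 - t ^ 2) / 2 := by
  set s : ℝ → ℝ := fun ρ ↦ √(ρ ^ 2 - t ^ 2)
  have hsq : ∀ ρ ∈ Ioo t 1, t ^ 2 < ρ ^ 2 := fun ρ hρ ↦ pow_lt_pow_left₀ hρ.1 ht two_ne_zero
  calc ∫ ρ in t..1, ρ / √(ρ ^ 2 - t ^ 2) * ∫ r in ρ..1, r / √(r ^ 2 - t ^ 2)
      = ∫ ρ in t..1, ρ / √(ρ ^ 2 - t ^ 2) * (s 1 - s ρ) := by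
        refine integral_congr_ae (ae_of_all _ fun ρ hρ ↦ ?_)
        rw [uIoc_of_le ht1] at hρ
        rw [integral_div_sqrt_sq_sub ((abs_of_nonneg ht).trans_lt hρ.1) hρ.2]
    _ = (s 1 - s t) ^ 2 / 2 :=
        integral_deriv_mul_sub ht1 (by fun_prop) (fun ρ hρ ↦ hasDerivAt_sqrt_sq_sub (hsq ρ hρ))
          fun ρ hρ ↦ div_nonneg (ht.trans hρ.1.le) (Real.sqrt_nonneg _)
    _ = (1 - t ^ 2) / 2 := by
        simp only [s, sub_self, Real.sqrt_zero, sub_zero, one_pow]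
        rw [Real.sq_sqrt (by nlinarith)]

theorem triple_integral_eq :
    2 * ∫ t in (0:ℝ)..1, t ^ 2 *
        ∫ ρ in t..(1:ℝ), (ρ / Real.sqrt (ρ ^ 2 - t ^ 2)) *
          ∫ r in ρ..(1:ℝ), r / Real.sqrt (r ^ 2 - t ^ 2) = 2 / 15 := by
  calc _ = 2 * ∫ t in (0:ℝ)..1, (t ^ 2 / 2 - t ^ 4 / 2) := by
        congr 1
        refine integral_congr fun t ht ↦ ?_
        rw [uIcc_of_le zero_le_one] at ht
        simp only [integral_mul_integral_div_sqrt_sq_sub ht.1 ht.2]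
        ring
    _ = 2 / 15 := by
        have hcont : ∀ n : ℕ, Continuous fun t : ℝ ↦ t ^ n / 2 := fun n ↦ by fun_prop
        rw [intervalIntegral.integral_sub ((hcont 2).intervalIntegrable _ _)
          ((hcont 4).intervalIntegrable _ _)]
        norm_num [intervalIntegral.integral_div, integral_pow]
end
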